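/- arXiv:1506.02064 — 3 statements merged into one kernel-verified Lean document; each statement's English description precedes it below -/
import Mathlib

section
/- Let F be a field, and consider F(t) embedded in both the Laurent series field F((t⁻¹)) (completion with respect to the valuation at infinity) and F((t)) (completion with respect to the valuation at zero). For any nonempty open set V ⊆ F((t⁻¹)) and any nonempty open set W ⊆ F((t)), the intersection V ∩ W ∩ F(t) is nonempty. -/
/-!
`F(t)` is dense in both completions, so `V` contains the image of some `a` and `W` that of some
`b`. The rational functions `eₙ = 1 / (1 + tⁿ)` tend to `0` at infinity and to `1` at zero, so
`a + (b - a) eₙ` tends to `a` in `F((t⁻¹))` and to `b` in `F((t))`, and lies in both open sets for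
large `n`.
-/

open FunctionField IsDedekindDomain

variable {F : Type*} [Field F] [DecidableEq (RatFunc F)]

/-- The canonical inclusion of `F(t)` into its completion `F((t⁻¹))` at infinity. -/
noncomputable def toFqtInfty (x : RatFunc F) : RatFunc.CompletionAtInfty F :=
  letI := inftyValuedFqt F
  UniformSpace.Completion.coe' (α := RatFunc F) x

/-- The canonical inclusion of `F(t)` into its completion `F((t))` at zero
(the `X`-adic completion). -/
noncomputable def toFqtZero (x : RatFunc F) :
    (Polynomial.idealX F).adicCompletion (RatFunc F) :=
  (↑x : (Polynomial.idealX F).adicCompletion (RatFunc F))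

open Filter Topology

theorem exists_map_mem_open_of_tendsto {K A B : Type*} [Ring K]
    [Ring A] [TopologicalSpace A] [IsTopologicalRing A]
    [Ring B] [TopologicalSpace B] [IsTopologicalRing B]
    (f : K →+* A) (g : K →+* B) (hf : DenseRange f) (hg : DenseRange g) (e : ℕ → K)
    (hfe : Tendsto (fun n ↦ f (e n)) atTop (𝓝 0)) (hge : Tendsto (fun n ↦ g (e n)) atTop (𝓝 1))
    {V : Set A} (hV : IsOpen V) (hVne : V.Nonempty) {W : Set B} (hW : IsOpen W)
    (hWne : W.Nonempty) :
    ∃ x : K, f x ∈ V ∧ g x ∈ W := by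
  obtain ⟨a, ha⟩ := hf.exists_mem_open hV hVne
  obtain ⟨b, hb⟩ := hg.exists_mem_open hW hWne
  have hf_lim : Tendsto (fun n ↦ f (a + (b - a) * e n)) atTop (𝓝 (f a)) := by
    simpa using (hfe.const_mul (f (b - a))).const_add (f a)
  have hg_lim : Tendsto (fun n ↦ g (a + (b - a) * e n)) atTop (𝓝 (g b)) := by
    simpa using (hge.const_mul (g (b - a))).const_add (g a)
  obtain ⟨n, hVn, hWn⟩ :=
    ((hf_lim.eventually (hV.mem_nhds ha)).and (hg_lim.eventually (hW.mem_nhds hb))).exists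
  exact ⟨_, hVn, hWn⟩

theorem toFqtInfty_eq_algebraMap :
    (toFqtInfty : RatFunc F → _) = algebraMap (RatFunc F) (RatFunc.CompletionAtInfty F) :=
  rfl

omit [DecidableEq (RatFunc F)] in
theorem toFqtZero_eq_algebraMap :
    (toFqtZero : RatFunc F → _) =
      algebraMap (RatFunc F) ((Polynomial.idealX F).adicCompletion (RatFunc F)) :=
  rfl

theorem denseRange_toFqtInfty : DenseRange (toFqtInfty (F := F)) :=
  let := RatFunc.inftyValued F
  UniformSpace.Completion.denseRange_coe

omit [DecidableEq (RatFunc F)] in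
theorem denseRange_toFqtZero : DenseRange (toFqtZero (F := F)) :=
  HeightOneSpectrum.denseRange_algebraMap _ _

theorem v_toFqtInfty (x : RatFunc F) :
    Valued.v (toFqtInfty x) = RatFunc.inftyValuation F x :=
  let := RatFunc.inftyValued F
  Valued.valuedCompletion_apply x

theorem tendsto_toFqtInfty_inv_one_add_X_pow :
    Tendsto (fun n : ℕ ↦ toFqtInfty (1 + RatFunc.X ^ n : RatFunc F)⁻¹) atTop (𝓝 0) := by
  have hu : Tendsto (fun n : ℕ ↦ toFqtInfty (RatFunc.X⁻¹ : RatFunc F) ^ n) atTop (𝓝 0) :=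
    Valued.tendsto_zero_pow_of_le_exp_neg_one <| by
      rw [v_toFqtInfty, ← one_div, RatFunc.inftyValuation.X_inv]
  -- `(1 + tⁿ)⁻¹ = uⁿ (uⁿ + 1)⁻¹` for `u = t⁻¹`, which has valuation `exp (-1)` at infinity
  have hlim := hu.mul ((hu.add_const 1).inv₀ (by simp))
  rw [zero_mul] at hlim
  refine hlim.congr fun n ↦ ?_
  have hXn : toFqtInfty (RatFunc.X : RatFunc F) ^ n ≠ 0 := by
    simp [toFqtInfty_eq_algebraMap, RatFunc.X_ne_zero]
  simp only [toFqtInfty_eq_algebraMap, map_inv₀, map_add, map_pow, map_one] at hXn ⊢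
  rw [inv_pow, ← mul_inv, mul_add, mul_inv_cancel₀ hXn, mul_one, add_comm]

omit [DecidableEq (RatFunc F)] in
theorem tendsto_toFqtZero_inv_one_add_X_pow :
    Tendsto (fun n : ℕ ↦ toFqtZero (1 + RatFunc.X ^ n : RatFunc F)⁻¹) atTop (𝓝 1) := by
  have ht : Tendsto (fun n : ℕ ↦ toFqtZero (RatFunc.X : RatFunc F) ^ n) atTop (𝓝 0) :=
    Valued.tendsto_zero_pow_of_le_exp_neg_one <| by
      rw [toFqtZero, HeightOneSpectrum.valuedAdicCompletion_eq_valuation',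
        Polynomial.valuation_X_eq_neg_one]
  have hlim := (ht.const_add 1).inv₀ (by simp)
  rw [add_zero, inv_one] at hlim
  simpa only [toFqtZero_eq_algebraMap, map_inv₀, map_add, map_pow, map_one] using hlim

/-- For any nonempty open `V ⊆ F((t⁻¹))` and nonempty open `W ⊆ F((t))`, there is an element
of `F(t)` lying in both: `V ∩ W ∩ F(t) ≠ ∅`. -/
theorem stmt_3 (V : Set (RatFunc.CompletionAtInfty F)) (hV : IsOpen V) (hVne : V.Nonempty)
    (W : Set ((Polynomial.idealX F).adicCompletion (RatFunc F)))
    (hW : IsOpen W) (hWne : W.Nonempty) :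
    ∃ x : RatFunc F, toFqtInfty x ∈ V ∧ toFqtZero x ∈ W :=
  exists_map_mem_open_of_tendsto (algebraMap (RatFunc F) (RatFunc.CompletionAtInfty F))
    (algebraMap (RatFunc F) ((Polynomial.idealX F).adicCompletion (RatFunc F)))
    denseRange_toFqtInfty denseRange_toFqtZero _
    tendsto_toFqtInfty_inv_one_add_X_pow tendsto_toFqtZero_inv_one_add_X_pow hV hVne hW hWne
end

section
/- Let F be a field. For any two elements v, w ∈ F(t) and any ε-neighborhoods of v in the ν_∞-topology and of w in the ν₀-topology, there exists a single element β ∈ F(t) lying in both neighborhoods; i.e., the diagonal image of F(t) in F((t⁻¹)) × F((t)) is dense. -/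
open RatFunc Polynomial

/- The valuation at infinity on `F(t)`: `ν_∞(p/q) = deg q - deg p`, with `ν_∞ 0 = ⊤`. -/
open Classical in
noncomputable def nuInf {F : Type*} [Field F] (x : RatFunc F) : WithTop ℤ :=
  if x = 0 then ⊤ else (-(x.intDegree) : ℤ)

/- The valuation at zero on `F(t)`: the order of vanishing at `t = 0`, with `ν₀ 0 = ⊤`. -/
open Classical in
noncomputable def nuZero {F : Type*} [Field F] (x : RatFunc F) : WithTop ℤ :=
  if x = 0 then ⊤
  else ((x.num.rootMultiplicity 0 : ℤ) - (x.denom.rootMultiplicity 0 : ℤ) : ℤ)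

lemma nuZero_div_aux {F : Type*} [Field F] (p q : F[X]) (hp : p ≠ 0) (hq : q ≠ 0) :
    nuZero (algebraMap F[X] (RatFunc F) p / algebraMap F[X] (RatFunc F) q)
      = (((p.rootMultiplicity 0 : ℤ) - (q.rootMultiplicity 0 : ℤ) : ℤ) : WithTop ℤ) := by
  set x : RatFunc F := algebraMap F[X] (RatFunc F) p / algebraMap F[X] (RatFunc F) q with hx
  have hpn : algebraMap F[X] (RatFunc F) p ≠ 0 := by
    simpa using hp
  have hqn : algebraMap F[X] (RatFunc F) q ≠ 0 := by
    simpa using hq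
  have hx0 : x ≠ 0 := div_ne_zero hpn hqn
  have hcross : x.num * q = p * x.denom := by
    have h1 : algebraMap F[X] (RatFunc F) x.num / algebraMap F[X] (RatFunc F) x.denom = x :=
      num_div_denom x
    have hdn : algebraMap F[X] (RatFunc F) x.denom ≠ 0 := by
      simpa using x.denom_ne_zero
    rw [hx, div_eq_div_iff hdn hqn] at h1
    apply RatFunc.algebraMap_injective F
    rw [map_mul, map_mul]
    exact h1
  have hnum0 : x.num ≠ 0 := num_ne_zero hx0
  have hrm : x.num.rootMultiplicity 0 + q.rootMultiplicity 0
      = p.rootMultiplicity 0 + x.denom.rootMultiplicity 0 := by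
    have h1 : (x.num * q).rootMultiplicity 0 = x.num.rootMultiplicity 0 + q.rootMultiplicity 0 :=
      rootMultiplicity_mul (mul_ne_zero hnum0 hq)
    have h2 : (p * x.denom).rootMultiplicity 0
        = p.rootMultiplicity 0 + x.denom.rootMultiplicity 0 :=
      rootMultiplicity_mul (mul_ne_zero hp x.denom_ne_zero)
    rw [← h1, ← h2, hcross]
  rw [nuZero, if_neg hx0]
  congr 1
  omega

/-- Density of the diagonal image of `F(t)` in `F((t⁻¹)) × F((t))`: any `ν_∞`-neighborhood of `v`
and `ν₀`-neighborhood of `w` contain a common element `β` of `F(t)`. -/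
theorem stmt_5 {F : Type*} [Field F] (v w : RatFunc F) (L M : ℤ) :
    ∃ β : RatFunc F, (L : WithTop ℤ) ≤ nuInf (β - v) ∧ (M : WithTop ℤ) ≤ nuZero (β - w) := by
  by_cases hvw : v = w
  · refine ⟨v, ?_, ?_⟩ <;> simp [hvw, nuInf, nuZero]
  have hc : w - v ≠ 0 := sub_ne_zero.mpr (Ne.symm hvw)
  have hc' : v - w ≠ 0 := sub_ne_zero.mpr hvw
  set N : ℕ := (max (L + (w - v).intDegree) (M + ((v - w).denom.rootMultiplicity 0 : ℤ))).toNat + 1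
    with hN
  have hN1 : 1 ≤ N := Nat.le_add_left 1 _
  set P : F[X] := (Polynomial.X ^ N : F[X]) + Polynomial.C 1 with hP
  have hPdeg : P.natDegree = N := natDegree_X_pow_add_C
  have hPne : P ≠ 0 := by
    intro h
    have : P.natDegree = 0 := by rw [h, natDegree_zero]
    omega
  set eP : RatFunc F := algebraMap F[X] (RatFunc F) P with heP
  have hePne : eP ≠ 0 := by simpa [heP] using hPne
  refine ⟨v + (w - v) / eP, ?_, ?_⟩
  · -- the ν_∞ bound
    have hβv : v + (w - v) / eP - v = (w - v) * eP⁻¹ := by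
      rw [div_eq_mul_inv]; ring
    have hinv : (eP⁻¹).intDegree = -(N : ℤ) := by
      have h1 : (eP * eP⁻¹).intDegree = eP.intDegree + (eP⁻¹).intDegree :=
        intDegree_mul hePne (inv_ne_zero hePne)
      rw [mul_inv_cancel₀ hePne, intDegree_one] at h1
      have h2 : eP.intDegree = (N : ℤ) := by
        rw [heP, intDegree_polynomial, hPdeg]
      omega
    have hmul : ((w - v) * eP⁻¹).intDegree = (w - v).intDegree - N :=
      by rw [intDegree_mul hc (inv_ne_zero hePne), hinv]; ring
    have hne : (w - v) * eP⁻¹ ≠ 0 := mul_ne_zero hc (inv_ne_zero hePne)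
    rw [hβv, nuInf, if_neg hne, hmul]
    have hineq : L ≤ -((w - v).intDegree - (N : ℤ)) := by
      have := Int.self_le_toNat (max (L + (w - v).intDegree)
        (M + ((v - w).denom.rootMultiplicity 0 : ℤ)))
      have h3 : L + (w - v).intDegree ≤ (max (L + (w - v).intDegree)
        (M + ((v - w).denom.rootMultiplicity 0 : ℤ))) := le_max_left _ _
      omega
    exact_mod_cast hineq
  · -- the ν₀ bound
    have hXN : algebraMap F[X] (RatFunc F) ((Polynomial.X ^ N : F[X])) ≠ 0 :=
      RatFunc.algebraMap_ne_zero (pow_ne_zero N Polynomial.X_ne_zero)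
    have key : v + (w - v) / eP - w
        = algebraMap F[X] (RatFunc F) ((Polynomial.X ^ N : F[X]) * (v - w).num)
          / algebraMap F[X] (RatFunc F) (P * (v - w).denom) := by
      have hdn : algebraMap F[X] (RatFunc F) (v - w).denom ≠ 0 :=
        RatFunc.algebraMap_ne_zero (v - w).denom_ne_zero
      have hnum : algebraMap F[X] (RatFunc F) (v - w).num
          = (v - w) * algebraMap F[X] (RatFunc F) (v - w).denom := by
        have h := num_div_denom (v - w)
        rw [div_eq_iff hdn] at h
        exact h
      have hePX : eP = algebraMap F[X] (RatFunc F) ((Polynomial.X ^ N : F[X])) + 1 := by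
        rw [heP, hP, map_add, Polynomial.C_1, map_one]
      have step1 : v + (w - v) / eP - w = ((v - w) * (eP - 1)) / eP := by
        field_simp
        ring
      have step2 : eP - 1 = algebraMap F[X] (RatFunc F) ((Polynomial.X ^ N : F[X])) := by
        rw [hePX]; ring
      rw [step1, step2, map_mul, map_mul, ← heP,
        div_eq_div_iff hePne (mul_ne_zero hePne hdn), hnum]
      ring
    rw [key, nuZero_div_aux _ _ (mul_ne_zero (pow_ne_zero N Polynomial.X_ne_zero) (num_ne_zero hc'))
      (mul_ne_zero hPne (v - w).denom_ne_zero)]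
    have hrmX : ((Polynomial.X ^ N : F[X]) : F[X]).rootMultiplicity 0 = N := by
      simpa using rootMultiplicity_X_sub_C_pow (0 : F) N
    have hrmP : P.rootMultiplicity 0 = 0 := by
      apply rootMultiplicity_eq_zero
      simp [hP, IsRoot, zero_pow (by omega : N ≠ 0)]
    rw [rootMultiplicity_mul (mul_ne_zero (pow_ne_zero N Polynomial.X_ne_zero) (num_ne_zero hc')),
      rootMultiplicity_mul (mul_ne_zero hPne (v - w).denom_ne_zero), hrmX, hrmP]
    have hineq : M ≤ ((N + (v - w).num.rootMultiplicity 0 : ℕ) : ℤ)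
        - ((0 + (v - w).denom.rootMultiplicity 0 : ℕ) : ℤ) := by
      have := Int.self_le_toNat (max (L + (w - v).intDegree)
        (M + ((v - w).denom.rootMultiplicity 0 : ℤ)))
      have h3 : M + ((v - w).denom.rootMultiplicity 0 : ℤ) ≤ (max (L + (w - v).intDegree)
        (M + ((v - w).denom.rootMultiplicity 0 : ℤ))) := le_max_right _ _
      push_cast
      omega
    exact_mod_cast hineq
end

section
/- Let F be a field and define l(Σ_{(i,j)} α_{i,j} C_{i,j}) = Σ |α_{i,j}| on the free ℤ-module on basis F × F. If B is a nonzero element of the kernel of the boundary map ∂(C_{a,b}) = e_a − f_b, and C_{x,y} appears in B with positive coefficient, then there exist x', y' such that C_{x',y} and C_{x,y'} appear in B with negative coefficients, and l(B − (C_{x,y} − C_{x',y} − C_{x,y'} + C_{x',y'})) ≤ l(B) − 2. -/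
open Finsupp

/-- The boundary map `∂` from the free `ℤ`-module on `{C_{a,b} : a, b ∈ F}` to the free
`ℤ`-module on `{e_a} ⊔ {f_b}`, sending `C_{a,b}` to `e_a - f_b`. -/
noncomputable def boundaryMap (F : Type*) [Field F] :
    ((F × F) →₀ ℤ) →ₗ[ℤ] ((F ⊕ F) →₀ ℤ) :=
  Finsupp.linearCombination ℤ
    (fun p : F × F => single (Sum.inl p.1) 1 - single (Sum.inr p.2) 1)

/-- The `ℓ¹`-length of a chain: the sum of the absolute values of its coefficients. -/
def chainLength {F : Type*} [Field F] (B : (F × F) →₀ ℤ) : ℤ :=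
  B.support.sum fun p => |B p|

open Classical in
theorem sum_col' {F : Type*} [Field F] (B : (F × F) →₀ ℤ)
    (hB : boundaryMap F B = 0) (y : F) :
    ∑ p ∈ B.support.filter (fun p => p.2 = y), B p = 0 := by
  have h := congrArg (fun g => g (Sum.inr y)) hB
  simp only [boundaryMap, Finsupp.linearCombination_apply, Finsupp.sum,
    Finsupp.finset_sum_apply, Finsupp.coe_zero, Pi.zero_apply,
    Finsupp.sub_apply, Finsupp.smul_apply, Finsupp.single_apply,
    reduceCtorEq, if_false, Sum.inr.injEq, smul_eq_mul, zero_sub, mul_neg,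
    Finset.sum_neg_distrib, neg_eq_zero, mul_ite, mul_one, mul_zero] at h
  rw [Finset.sum_filter]
  exact h

open Classical in
theorem sum_row' {F : Type*} [Field F] (B : (F × F) →₀ ℤ)
    (hB : boundaryMap F B = 0) (x : F) :
    ∑ p ∈ B.support.filter (fun p => p.1 = x), B p = 0 := by
  have h := congrArg (fun g => g (Sum.inl x)) hB
  simp only [boundaryMap, Finsupp.linearCombination_apply, Finsupp.sum,
    Finsupp.finset_sum_apply, Finsupp.coe_zero, Pi.zero_apply,
    Finsupp.sub_apply, Finsupp.smul_apply, Finsupp.single_apply,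
    reduceCtorEq, if_false, Sum.inl.injEq, smul_eq_mul, sub_zero,
    mul_ite, mul_one, mul_zero] at h
  rw [Finset.sum_filter]
  exact h

theorem chainLength_eq_sum {F : Type*} [Field F] (g : (F × F) →₀ ℤ)
    (s : Finset (F × F)) (h : g.support ⊆ s) :
    chainLength g = ∑ p ∈ s, |g p| := by
  exact Finset.sum_subset h (fun p _ hp => by
    simp [Finsupp.notMem_support_iff.mp hp])

theorem abs_sub_one_of_pos (a : ℤ) (ha : 0 < a) : |a - 1| - |a| = -1 := by
  rw [abs_of_nonneg (by omega), abs_of_pos ha]; ring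

theorem abs_add_one_of_neg (a : ℤ) (ha : a < 0) : |a + 1| - |a| = -1 := by
  rw [abs_of_nonpos (by omega), abs_of_neg ha]; ring

theorem abs_sub_one_le (a : ℤ) : |a - 1| - |a| ≤ 1 := by
  have := abs_sub_abs_le_abs_sub (a - 1) a
  simp at this; omega

/-- If `B` is a nonzero cycle and `C_{x,y}` appears in `B` with positive coefficient, then there
are `x', y'` with `C_{x',y}` and `C_{x,y'}` appearing with negative coefficients, and subtracting
the corresponding basic cycle decreases the length by at least 2. -/
theorem stmt_9 {F : Type*} [Field F] (B : (F × F) →₀ ℤ) (hB0 : B ≠ 0)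
    (hB : boundaryMap F B = 0) (x y : F) (hxy : 0 < B (x, y)) :
    ∃ x' y' : F, B (x', y) < 0 ∧ B (x, y') < 0 ∧
      chainLength (B - (single (x, y) 1 - single (x', y) 1 - single (x, y') 1
          + single (x', y') 1))
        ≤ chainLength B - 2 := by
  classical
  have hmemxy : (x, y) ∈ B.support := Finsupp.mem_support_iff.mpr (by omega)
  -- find x'
  obtain ⟨x', hx'neg⟩ : ∃ x', B (x', y) < 0 := by
    by_contra hc
    push_neg at hc
    have h0 := sum_col' B hB y
    have hpos : 0 < ∑ p ∈ B.support.filter (fun p => p.2 = y), B p := by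
      refine Finset.sum_pos' (fun p hp => ?_) ⟨(x, y), ?_, hxy⟩
      swap
      · exact Finset.mem_filter.mpr ⟨hmemxy, rfl⟩
      obtain ⟨_, hp2⟩ := Finset.mem_filter.mp hp
      have := hc p.1
      rw [show (p.1, y) = p by rw [← hp2]] at this
      exact this
    omega
  obtain ⟨y', hy'neg⟩ : ∃ y', B (x, y') < 0 := by
    by_contra hc
    push_neg at hc
    have h0 := sum_row' B hB x
    have hpos : 0 < ∑ p ∈ B.support.filter (fun p => p.1 = x), B p := by
      refine Finset.sum_pos' (fun p hp => ?_) ⟨(x, y), ?_, hxy⟩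
      swap
      · exact Finset.mem_filter.mpr ⟨hmemxy, rfl⟩
      obtain ⟨_, hp1⟩ := Finset.mem_filter.mp hp
      have := hc p.2
      rw [show (x, p.2) = p by rw [← hp1]] at this
      exact this
    omega
  refine ⟨x', y', hx'neg, hy'neg, ?_⟩
  have hx' : x' ≠ x := fun h => by rw [h] at hx'neg; omega
  have hy' : y' ≠ y := fun h => by rw [h] at hy'neg; omega
  set D : (F × F) →₀ ℤ := single (x, y) 1 - single (x', y) 1 - single (x, y') 1
      + single (x', y') 1 with hD
  have hDval : ∀ p, D p = (if p = (x, y) then 1 else 0) - (if p = (x', y) then 1 else 0)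
      - (if p = (x, y') then 1 else 0) + (if p = (x', y') then 1 else 0) := by
    intro p
    simp [hD, Finsupp.single_apply, eq_comm]
  set t : Finset (F × F) := {(x, y), (x', y), (x, y'), (x', y')} with ht
  set s : Finset (F × F) := B.support ∪ t with hs
  have hDzero : ∀ p, p ∉ t → D p = 0 := by
    intro p hp
    simp only [ht, Finset.mem_insert, Finset.mem_singleton, not_or] at hp
    rw [hDval]
    simp [hp.1, hp.2.1, hp.2.2.1, hp.2.2.2]
  have hsub1 : B.support ⊆ s := Finset.subset_union_left
  have hsub2 : (B - D).support ⊆ s := by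
    intro p hp
    rw [Finsupp.mem_support_iff] at hp
    by_contra hps
    simp only [hs, Finset.mem_union, not_or] at hps
    apply hp
    rw [Finsupp.sub_apply, Finsupp.notMem_support_iff.mp hps.1, hDzero p hps.2]
    ring
  rw [chainLength_eq_sum B s hsub1, chainLength_eq_sum _ s hsub2]
  have key : ∑ p ∈ s, (|(B - D) p| - |B p|) ≤ -2 := by
    have hts := Finset.sum_subset (f := fun p => |(B - D) p| - |B p|)
      (show t ⊆ s from Finset.subset_union_right)
      (fun p _ hp => by simp [Finsupp.sub_apply, hDzero p hp])
    rw [← hts]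
    have h1 : ((x, y) : F × F) ≠ (x', y) := by simp [hx'.symm]
    have h2 : ((x, y) : F × F) ≠ (x, y') := by simp [hy'.symm]
    have h3 : ((x, y) : F × F) ≠ (x', y') := by simp [hx'.symm]
    have h4 : ((x', y) : F × F) ≠ (x, y') := by simp [hx']
    have h5 : ((x', y) : F × F) ≠ (x', y') := by simp [hy'.symm]
    have h6 : ((x, y') : F × F) ≠ (x', y') := by simp [hx'.symm]
    rw [ht]
    rw [Finset.sum_insert (by simp [h1, h2, h3]),
        Finset.sum_insert (by simp [h4, h5]),
        Finset.sum_insert (by simp [h6]), Finset.sum_singleton]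
    simp only [Finsupp.sub_apply, hDval]
    simp only [if_true, if_neg h1, if_neg h2, if_neg h3, if_neg h1.symm,
      if_neg h4, if_neg h5, if_neg h2.symm, if_neg h4.symm, if_neg h6,
      if_neg h3.symm, if_neg h5.symm, if_neg h6.symm]
    have e1 := abs_sub_one_of_pos _ hxy
    have e2 := abs_add_one_of_neg _ hx'neg
    have e3 := abs_add_one_of_neg _ hy'neg
    have e4 := abs_sub_one_le (B (x', y'))
    simp only [sub_zero, zero_sub, add_zero, zero_add, sub_neg_eq_add]
    omega
  rw [Finset.sum_sub_distrib] at key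
  omega
end
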